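/- Let F_{μν} and f_{μν} be real antisymmetric 4×4 matrices, k ∈ ℝ⁴, and let L_F, L_{FF} be real numbers with L_F ≠ 0. Set ξ := F^{αβ} f_{αβ} and assume ξ ≠ 0. Suppose the discontinuity relations of a nonlinear electrodynamics L = L(F) hold: L_F f^{μν} k_ν + 2 L_{FF} ξ F^{μν} k_ν = 0 for all μ, and the cyclic identity f_{μν} k_λ + f_{νλ} k_μ + f_{λμ} k_ν = 0 for all μ, ν, λ. Then the wave vector k is a null vector of the effective metric g^{μν} := L_F η^{μν} − 4 L_{FF} F^{μα} F_α{}^ν, i.e. ( L_F η^{μν} − 4 L_{FF} F^{μα} F_α{}^ν ) k_μ k_ν = 0. -/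

import Mathlib

open scoped BigOperators

noncomputable section

/-- The Minkowski metric η = diag(1,-1,-1,-1) (same components for η_{μν} and η^{μν}). -/
def η (μ ν : Fin 4) : ℝ := if μ = ν then (if μ = 0 then 1 else -1) else 0

/-!
Contracting the cyclic identity `f_{μν} k_λ + f_{νλ} k_μ + f_{λμ} k_ν = 0` with `F^{μν} k^λ` and
using the antisymmetry of `F` and `f` gives `ξ k² = -2 k_μ F^{μα} f_{αβ} k^β`. Contracting the
first discontinuity relation with `k_μ F^μ{}_α` turns the right-hand side, multiplied by `L_F`, into
`4 L_{FF} ξ k_μ F^{μα} F_α{}^ν k_ν`; so `ξ` times the effective quadratic form of `k` vanishes.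
The argument works for any symmetric metric `g`, raising both indices being `A ↦ g * A * g`.
-/

open Matrix

namespace Matrix

variable {ι R : Type*} [Fintype ι] [CommRing R]

theorem mul_mul_transpose_apply (g A : Matrix ι ι R) (μ ν : ι) :
    (g * A * gᵀ) μ ν = ∑ α, ∑ β, g μ α * g ν β * A α β := by
  simp only [mul_apply, transpose_apply, Finset.sum_mul]
  rw [Finset.sum_comm]
  exact Finset.sum_congr rfl fun _ _ => Finset.sum_congr rfl fun _ _ => by ring

theorem sum_sum_mul_mul_eq_dotProduct_mulVec (M : Matrix ι ι R) (k : ι → R) :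
    ∑ μ, ∑ ν, M μ ν * k μ * k ν = k ⬝ᵥ (M *ᵥ k) := by
  simp only [dotProduct, mulVec, Finset.mul_sum]
  exact Finset.sum_congr rfl fun _ _ => Finset.sum_congr rfl fun _ _ => by ring

end Matrix

section EffectiveMetric

variable {ι R : Type*} [Fintype ι] [CommRing R]

theorem contraction_mul_dotProduct_add_two_mul_eq_zero {A f : Matrix ι ι R} (hA : Aᵀ = -A)
    (hf : fᵀ = -f) {k : ι → R} (hcyc : ∀ μ ν l, f μ ν * k l + f ν l * k μ + f l μ * k ν = 0)
    (u : ι → R) :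
    (∑ μ, ∑ ν, A μ ν * f μ ν) * (k ⬝ᵥ u) + 2 * (k ⬝ᵥ (A * f) *ᵥ u) = 0 := by
  have hA' : ∀ μ ν, A ν μ = -A μ ν := fun μ ν => by simpa using congrFun (congrFun hA μ) ν
  have hf' : ∀ μ ν, f ν μ = -f μ ν := fun μ ν => by simpa using congrFun (congrFun hf μ) ν
  have e1 : (∑ μ, ∑ ν, A μ ν * f μ ν) * (k ⬝ᵥ u) =
      ∑ μ, ∑ ν, ∑ l, A μ ν * u l * (f μ ν * k l) := by
    rw [Finset.sum_mul]
    refine Finset.sum_congr rfl fun μ _ => ?_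
    rw [Finset.sum_mul]
    refine Finset.sum_congr rfl fun ν _ => ?_
    rw [dotProduct, Finset.mul_sum]
    exact Finset.sum_congr rfl fun l _ => by ring
  have e2 : k ⬝ᵥ (A * f) *ᵥ u = ∑ μ, ∑ ν, ∑ l, A μ ν * u l * (f ν l * k μ) := by
    simp only [dotProduct, mulVec, mul_apply, Finset.sum_mul, Finset.mul_sum]
    refine Finset.sum_congr rfl fun _ _ => ?_
    rw [Finset.sum_comm]
    exact Finset.sum_congr rfl fun _ _ => Finset.sum_congr rfl fun _ _ => by ring
  -- swap `μ ↔ ν` and use both antisymmetries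
  have e3 : ∑ μ, ∑ ν, ∑ l, A μ ν * u l * (f l μ * k ν) =
      ∑ μ, ∑ ν, ∑ l, A μ ν * u l * (f ν l * k μ) := by
    rw [Finset.sum_comm]
    exact Finset.sum_congr rfl fun μ _ => Finset.sum_congr rfl fun ν _ =>
      Finset.sum_congr rfl fun l _ => by rw [hA' μ ν, hf' ν l]; ring
  have hsum : ∑ μ, ∑ ν, ∑ l, A μ ν * u l * (f μ ν * k l + f ν l * k μ + f l μ * k ν) = 0 := by
    simp only [hcyc, mul_zero, Finset.sum_const_zero]
  simp only [mul_add, Finset.sum_add_distrib] at hsum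
  rw [e1, e2]
  linear_combination hsum - e3

def effectiveMetric (g F : Matrix ι ι R) (LF LFF : R) : Matrix ι ι R :=
  LF • g - (4 * LFF) • (g * F * g * F * g)

theorem effectiveMetric_apply (g F : Matrix ι ι R) (LF LFF : R) (μ ν : ι) :
    effectiveMetric g F LF LFF μ ν =
      LF * g μ ν - 4 * LFF * ∑ α, (g * F * g) μ α * ∑ β, F α β * g β ν := by
  rw [effectiveMetric, show g * F * g * F * g = g * F * g * (F * g) by simp only [Matrix.mul_assoc]]
  simp only [Matrix.sub_apply, Matrix.smul_apply, smul_eq_mul, mul_apply (M := g * F * g),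
    mul_apply (M := F)]

theorem dotProduct_effectiveMetric_mulVec_eq_zero [NoZeroDivisors R] {g F f : Matrix ι ι R}
    (hg : gᵀ = g) (hF : Fᵀ = -F) (hf : fᵀ = -f) {k : ι → R} {LF LFF ξ : R}
    (hξ : ξ = ∑ α, ∑ β, (g * F * g) α β * f α β) (hξ0 : ξ ≠ 0)
    (h1 : (LF • (g * f * g) + (2 * LFF * ξ) • (g * F * g)) *ᵥ k = 0)
    (hcyc : ∀ μ ν l, f μ ν * k l + f ν l * k μ + f l μ * k ν = 0) :
    k ⬝ᵥ (effectiveMetric g F LF LFF *ᵥ k) = 0 := by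
  have hFup : (g * F * g)ᵀ = -(g * F * g) := by
    simp only [transpose_mul, hg, hF, Matrix.mul_neg, Matrix.neg_mul, Matrix.mul_assoc]
  have hcontr := contraction_mul_dotProduct_add_two_mul_eq_zero hFup hf hcyc (g *ᵥ k)
  rw [← hξ] at hcontr
  set w := k ᵥ* (g * F)
  have hff : k ⬝ᵥ (g * F * g * f) *ᵥ (g *ᵥ k) = w ⬝ᵥ (g * f * g) *ᵥ k := by
    simp only [w, dotProduct_mulVec, vecMul_vecMul, mulVec_mulVec, Matrix.mul_assoc]
  have hFF : k ⬝ᵥ (g * F * g * F * g) *ᵥ k = w ⬝ᵥ (g * F * g) *ᵥ k := by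
    simp only [w, dotProduct_mulVec, vecMul_vecMul, Matrix.mul_assoc]
  have h1w := congrArg (w ⬝ᵥ ·) h1
  simp only [add_mulVec, smul_mulVec, dotProduct_add, dotProduct_smul, smul_eq_mul,
    dotProduct_zero] at h1w
  have hmul : ξ * (k ⬝ᵥ effectiveMetric g F LF LFF *ᵥ k) = 0 := by
    simp only [effectiveMetric, sub_mulVec, smul_mulVec, dotProduct_sub, dotProduct_smul,
      smul_eq_mul, hFF]
    rw [hff] at hcontr
    linear_combination LF * hcontr - 2 * h1w
  exact (mul_eq_zero.mp hmul).resolve_left hξ0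

end EffectiveMetric

theorem transpose_of_η : (of η)ᵀ = of η := by
  ext μ ν
  simp only [transpose_apply, of_apply, η]
  split_ifs <;> simp_all

theorem nonlinear_electrodynamics_effective_null_general
    (F f : Fin 4 → Fin 4 → ℝ) (k : Fin 4 → ℝ) (LF LFF ξ : ℝ)
    (hFa : ∀ μ ν, F μ ν = - F ν μ)
    (hfa : ∀ μ ν, f μ ν = - f ν μ)
    -- raised components
    (Fup fup : Fin 4 → Fin 4 → ℝ)
    (hFup : ∀ μ ν, Fup μ ν = ∑ α, ∑ b, η μ α * η ν b * F α b)
    (hfup : ∀ μ ν, fup μ ν = ∑ α, ∑ b, η μ α * η ν b * f α b)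
    -- ξ := F^{αβ} f_{αβ} ≠ 0
    (hξ : ξ = ∑ α, ∑ b, Fup α b * f α b) (hξ0 : ξ ≠ 0)
    -- L_F f^{μν} k_ν + 2 L_{FF} ξ F^{μν} k_ν = 0
    (h1 : ∀ μ, ∑ ν, (LF * fup μ ν + 2 * LFF * ξ * Fup μ ν) * k ν = 0)
    -- cyclic identity for f
    (h2 : ∀ μ ν l, f μ ν * k l + f ν l * k μ + f l μ * k ν = 0) :
    -- effective-metric null condition, with F^{μα}F_α{}^ν = η^{μρ}F_{ρα}η^{αβ}F_{βλ}η^{λν}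
    ∑ μ, ∑ ν,
      (LF * η μ ν - 4 * LFF * (∑ α, Fup μ α * (∑ b, F α b * η b ν)))
        * k μ * k ν = 0 := by
  have raise_eq {A Aup : Fin 4 → Fin 4 → ℝ}
      (h : ∀ μ ν, Aup μ ν = ∑ α, ∑ b, η μ α * η ν b * A α b) : of Aup = of η * of A * of η := by
    ext μ ν
    have := mul_mul_transpose_apply (of η) (of A) μ ν
    rw [transpose_of_η] at this
    rw [this]
    exact h μ ν
  have antisymm {A : Fin 4 → Fin 4 → ℝ} (h : ∀ μ ν, A μ ν = - A ν μ) : (of A)ᵀ = -of A := by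
    ext μ ν
    exact h ν μ
  have h1' : (LF • of fup + (2 * LFF * ξ) • of Fup) *ᵥ k = 0 := by
    ext μ
    simpa [mulVec, dotProduct, add_mul, mul_assoc] using h1 μ
  rw [raise_eq hFup, raise_eq hfup] at h1'
  have hnull := dotProduct_effectiveMetric_mulVec_eq_zero transpose_of_η (antisymm hFa)
    (antisymm hfa) (by simpa [← raise_eq hFup] using hξ) hξ0 h1' h2
  rw [← sum_sum_mul_mul_eq_dotProduct_mulVec] at hnull
  simpa [effectiveMetric_apply, ← raise_eq hFup] using hnull

/-- discontinuity relations of nonlinear electrodynamics L = L(F) force the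
wave covector to be null in the effective metric g^{μν} = L_F η^{μν} − 4L_{FF} F^{μα}F_α{}^ν. -/
theorem nonlinear_electrodynamics_effective_null
    (F f : Fin 4 → Fin 4 → ℝ) (k : Fin 4 → ℝ) (LF LFF ξ : ℝ)
    (hFa : ∀ μ ν, F μ ν = - F ν μ)
    (hfa : ∀ μ ν, f μ ν = - f ν μ)
    (hLF : LF ≠ 0)
    -- raised components
    (Fup fup : Fin 4 → Fin 4 → ℝ)
    (hFup : ∀ μ ν, Fup μ ν = ∑ α, ∑ b, η μ α * η ν b * F α b)
    (hfup : ∀ μ ν, fup μ ν = ∑ α, ∑ b, η μ α * η ν b * f α b)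
    -- ξ := F^{αβ} f_{αβ} ≠ 0
    (hξ : ξ = ∑ α, ∑ b, Fup α b * f α b) (hξ0 : ξ ≠ 0)
    -- L_F f^{μν} k_ν + 2 L_{FF} ξ F^{μν} k_ν = 0
    (h1 : ∀ μ, ∑ ν, (LF * fup μ ν + 2 * LFF * ξ * Fup μ ν) * k ν = 0)
    -- cyclic identity for f
    (h2 : ∀ μ ν l, f μ ν * k l + f ν l * k μ + f l μ * k ν = 0) :
    -- effective-metric null condition, with F^{μα}F_α{}^ν = η^{μρ}F_{ρα}η^{αβ}F_{βλ}η^{λν}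
    ∑ μ, ∑ ν,
      (LF * η μ ν - 4 * LFF * (∑ α, Fup μ α * (∑ b, F α b * η b ν)))
        * k μ * k ν = 0 :=
  nonlinear_electrodynamics_effective_null_general F f k LF LFF ξ hFa hfa Fup fup hFup hfup hξ hξ0
    h1 h2
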